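/- Let G be a finite connected multigraph. Then every edge of G belongs to at most one simple cycle (i.e., G is a quasi-cactus) if and only if λ(v, w) ∈ {1, 2} for every pair of distinct vertices v, w of G. -/

import Mathlib

set_option autoImplicit false

/-! ## Multigraphs -/

/-- A multigraph: a vertex type `V`, an edge type `E`, and an assignment to each edge of
its unordered pair of endpoints.  Loops and parallel edges are allowed. -/
structure Multigraph (V E : Type) where
  ends : E → Sym2 V

namespace Multigraph

variable {V E : Type}

/-- `G.ReachAvoid F u v` : `v` can be reached from `u` by a walk using no edge of `F`. -/
inductive ReachAvoid (G : Multigraph V E) (F : Set E) : V → V → Prop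
  | refl (v : V) : ReachAvoid G F v v
  | tail {u v w : V} (e : E) (he : e ∉ F) (hvw : G.ends e = s(v, w))
      (h : ReachAvoid G F u v) : ReachAvoid G F u w

/-- A multigraph is connected if any two vertices are joined by a walk. -/
def Connected (G : Multigraph V E) : Prop := ∀ u v : V, G.ReachAvoid ∅ u v

/-- `F` is a set of edges whose deletion disconnects `v` from `w`. -/
def IsEdgeCut (G : Multigraph V E) (v w : V) (F : Set E) : Prop := ¬ G.ReachAvoid F v w

/-- Edge connectivity `λ(v, w)`: the minimum number of edges whose deletion
disconnects `v` from `w`. -/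
noncomputable def edgeConn (G : Multigraph V E) (v w : V) : ℕ :=
  sInf {k : ℕ | ∃ F : Finset E, F.card = k ∧ G.IsEdgeCut v w ↑F}

/-- Walks in a multigraph, recorded together with the edges they traverse. -/
inductive Walk (G : Multigraph V E) : V → V → Type
  | nil (v : V) : Walk G v v
  | cons {u v w : V} (e : E) (huv : G.ends e = s(u, v)) (p : Walk G v w) : Walk G u w

namespace Walk

variable {G : Multigraph V E}

/-- The list of edges traversed by a walk. -/
def edges : ∀ {u v : V}, G.Walk u v → List E
  | _, _, .nil _ => []
  | _, _, .cons e _ p => e :: edges p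

/-- The list of vertices visited by a walk (including both endpoints). -/
def verts : ∀ {u v : V}, G.Walk u v → List V
  | _, v, .nil _ => [v]
  | u, _, .cons _ _ p => u :: verts p

/-- A walk is a path if it visits no vertex twice. -/
def IsPath {u v : V} (p : G.Walk u v) : Prop := p.verts.Nodup

end Walk

/-- `S` is the edge set of a simple cycle of `G`: a nonempty closed walk with no repeated
edges and no repeated vertices (other than the final return to the starting point).
A loop is a simple cycle of length one. -/
def IsSimpleCycleOn [DecidableEq E] (G : Multigraph V E) (S : Finset E) : Prop :=
  ∃ (v : V) (p : G.Walk v v),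
    p.edges ≠ [] ∧ p.edges.Nodup ∧ p.verts.dropLast.Nodup ∧ p.edges.toFinset = S

/-- A cactus: a connected multigraph in which every edge lies on exactly one simple cycle
(simple cycles being identified with their edge sets). -/
def IsCactus [DecidableEq E] (G : Multigraph V E) : Prop :=
  G.Connected ∧ ∀ e : E, ∃! S : Finset E, G.IsSimpleCycleOn S ∧ e ∈ S

/-- Two-edge-connected: connected, and still connected after deleting any single edge. -/
def TwoEdgeConnected (G : Multigraph V E) : Prop :=
  G.Connected ∧ ∀ (e : E) (u v : V), G.ReachAvoid {e} u v

/-- The quotient multigraph by a partition (setoid) of the vertices: the vertices are the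
blocks, and each edge joins the blocks of its original endpoints. -/
def quot (G : Multigraph V E) (σ : Setoid V) : Multigraph (Quotient σ) E :=
  ⟨fun e => (G.ends e).map (Quotient.mk σ)⟩

/-- Degree of a vertex: the number of edge-incidences at it (loops count twice). -/
def degree [DecidableEq V] [Fintype E] (G : Multigraph V E) (v : V) : ℕ :=
  ∑ e : E,
    Sym2.lift
      ⟨fun a b => (if a = v then 1 else 0) + (if b = v then 1 else 0),
        fun _ _ => add_comm _ _⟩ (G.ends e)

/-- A leaf is a vertex of degree one. -/
def IsLeaf [DecidableEq V] [Fintype E] (G : Multigraph V E) (v : V) : Prop :=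
  G.degree v = 1

/-- A tree: a connected multigraph with no simple cycles. -/
def IsTree [DecidableEq E] (G : Multigraph V E) : Prop :=
  G.Connected ∧ ∀ S : Finset E, ¬ G.IsSimpleCycleOn S

end Multigraph

/-- An embedding of the multigraph `H` into `G`, realizing `H` as a subgraph of `G`. -/
structure Multigraph.Embedding {W F V E : Type} (H : Multigraph W F) (G : Multigraph V E) where
  vmap : W → V
  emap : F → E
  vmap_inj : Function.Injective vmap
  emap_inj : Function.Injective emap
  ends_map : ∀ f : F, G.ends (emap f) = (H.ends f).map vmap

/-! ## Multidigraphs -/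

/-- A multidigraph: vertex type `V`, edge type `E`, and source and target maps. -/
structure Multidigraph (V E : Type) where
  src : E → V
  tgt : E → V

namespace Multidigraph

variable {V E : Type}

/-- The underlying multigraph of a multidigraph. -/
def toMultigraph (D : Multidigraph V E) : Multigraph V E :=
  ⟨fun e => s(D.src e, D.tgt e)⟩

/-- Directed walks in a multidigraph. -/
inductive DiWalk (D : Multidigraph V E) : V → V → Type
  | nil (v : V) : DiWalk D v v
  | cons {u v w : V} (e : E) (hs : D.src e = u) (ht : D.tgt e = v)
      (p : DiWalk D v w) : DiWalk D u w

namespace DiWalk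

variable {D : Multidigraph V E}

/-- The list of edges traversed by a directed walk. -/
def edges : ∀ {u v : V}, D.DiWalk u v → List E
  | _, _, .nil _ => []
  | _, _, .cons e _ _ p => e :: edges p

/-- The list of vertices visited by a directed walk. -/
def verts : ∀ {u v : V}, D.DiWalk u v → List V
  | _, v, .nil _ => [v]
  | u, _, .cons _ _ _ p => u :: verts p

end DiWalk

/-- `S` is the edge set of a simple directed cycle of `D`. -/
def IsDiCycleOn [DecidableEq E] (D : Multidigraph V E) (S : Finset E) : Prop :=
  ∃ (v : V) (p : D.DiWalk v v),
    p.edges ≠ [] ∧ p.edges.Nodup ∧ p.verts.dropLast.Nodup ∧ p.edges.toFinset = S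

/-- An oriented cactus: the underlying multigraph is a cactus and each of its simple
cycles (pads) is a directed cycle. -/
def IsOrientedCactus [DecidableEq E] (D : Multidigraph V E) : Prop :=
  D.toMultigraph.IsCactus ∧
    ∀ S : Finset E, D.toMultigraph.IsSimpleCycleOn S → D.IsDiCycleOn S

/-- The quotient multidigraph by a partition (setoid) of the vertices. -/
def quot (D : Multidigraph V E) (σ : Setoid V) : Multidigraph (Quotient σ) E where
  src := fun e => Quotient.mk σ (D.src e)
  tgt := fun e => Quotient.mk σ (D.tgt e)

/-- Indegree of a vertex: the number of edges with target `v`. -/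
def indeg [DecidableEq V] [Fintype E] (D : Multidigraph V E) (v : V) : ℕ :=
  (Finset.univ.filter fun e => D.tgt e = v).card

/-- Outdegree of a vertex: the number of edges with source `v`. -/
def outdeg [DecidableEq V] [Fintype E] (D : Multidigraph V E) (v : V) : ℕ :=
  (Finset.univ.filter fun e => D.src e = v).card

end Multidigraph

/-- An embedding of the multidigraph `H` into `G`, realizing `H` as a subgraph of `G`. -/
structure Multidigraph.Embedding {W F V E : Type}
    (H : Multidigraph W F) (G : Multidigraph V E) where
  vmap : W → V
  emap : F → E
  vmap_inj : Function.Injective vmap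
  emap_inj : Function.Injective emap
  src_map : ∀ f : F, G.src (emap f) = vmap (H.src f)
  tgt_map : ∀ f : F, G.tgt (emap f) = vmap (H.tgt f)

/-! ## Cycle graphs and non-crossing partitions -/

/-- The cycle graph of length `n`: vertices `Fin n`, edges `Fin n`, edge `i` joining
`v i` and `v (i+1)` (indices mod `n`). -/
def cycleGraph (n : ℕ) [NeZero n] : Multigraph (Fin n) (Fin n) :=
  ⟨fun i => s(i, i + 1)⟩

/-- The cycle graph of length `n` in which each edge carries an orientation:
edge `i` is oriented counterclockwise (from `v i` to `v (i+1)`) if `orient i = true`,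
and clockwise otherwise. -/
def cycleDigraph (n : ℕ) [NeZero n] (orient : Fin n → Bool) : Multidigraph (Fin n) (Fin n) where
  src := fun i => if orient i then i else i + 1
  tgt := fun i => if orient i then i + 1 else i

/-- A relation (e.g. a partition) on `Fin m` is non-crossing if there are no indices
`i₁ < i₂ < i₃ < i₄` with `i₁, i₃` in one block and `i₂, i₄` in a different block. -/
def NonCrossingRel {m : ℕ} (r : Fin m → Fin m → Prop) : Prop :=
  ¬ ∃ i₁ i₂ i₃ i₄ : Fin m, i₁ < i₂ ∧ i₂ < i₃ ∧ i₃ < i₄ ∧ r i₁ i₃ ∧ r i₂ i₄ ∧ ¬ r i₁ i₂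

/-- The union of a partition `σ` of the vertices `v₁, …, vₙ` (at the even positions) and
a partition `κ` of the edges `e₁, …, eₙ` (at the odd positions) of a cycle, as a relation
on the `2n` interlaced points `v₁, e₁, v₂, e₂, …, vₙ, eₙ`. -/
def interRel {n : ℕ} (σ κ : Setoid (Fin n)) (x y : Fin (2 * n)) : Prop :=
  (x.val % 2 = 0 ∧ y.val % 2 = 0 ∧
    σ.r ⟨x.val / 2, by have := x.isLt; omega⟩ ⟨y.val / 2, by have := y.isLt; omega⟩) ∨
  (x.val % 2 = 1 ∧ y.val % 2 = 1 ∧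
    κ.r ⟨x.val / 2, by have := x.isLt; omega⟩ ⟨y.val / 2, by have := y.isLt; omega⟩)

/-- `κ` is the Kreweras complement of `σ`: the largest partition of the edges such that
the union `σ ∪ κ` is non-crossing with respect to the interlaced (cyclic) order. -/
def IsKrewerasComplement {n : ℕ} (σ κ : Setoid (Fin n)) : Prop :=
  NonCrossingRel (interRel σ κ) ∧
    ∀ κ' : Setoid (Fin n), NonCrossingRel (interRel σ κ') → κ' ≤ κ

open Classical in
/-- The block of the partition `κ` containing `i`, as a finite set. -/
noncomputable def setoidClass {n : ℕ} (κ : Setoid (Fin n)) (i : Fin n) : Finset (Fin n) :=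
  Finset.univ.filter fun j => κ.r i j

open Fin.NatCast in
/-- `j` is the next element of `B` encountered strictly after `i` in the cyclic order of
`Fin n` (if `B = {i}` then `j = i` itself, one full turn later). -/
def CyclicNextIn {n : ℕ} [NeZero n] (B : Finset (Fin n)) (i j : Fin n) : Prop :=
  i ∈ B ∧ j ∈ B ∧ ∃ d : ℕ, 0 < d ∧ d ≤ n ∧ j = i + (d : Fin n) ∧
    ∀ d' : ℕ, 0 < d' → d' < d → i + (d' : Fin n) ∉ B

/-! ## Wedges of two (di)graphs at their roots -/

/-- The canonical map from the vertices of `t'` into the wedge vertex type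
`V ⊕ {x : V' // x ≠ ρ'}`, sending the root `ρ'` to (the image of) `ρ`. -/
def wedgeJ {V V' : Type} [DecidableEq V'] (ρ : V) (ρ' : V') :
    V' → V ⊕ {x : V' // x ≠ ρ'} :=
  fun x => if h : x = ρ' then Sum.inl ρ else Sum.inr ⟨x, h⟩

/-- The wedge of two multigraphs `t`, `t'` obtained by identifying `ρ ∈ t` with `ρ' ∈ t'`. -/
def Multigraph.wedge {V E V' E' : Type} [DecidableEq V']
    (t : Multigraph V E) (t' : Multigraph V' E') (ρ : V) (ρ' : V') :
    Multigraph (V ⊕ {x : V' // x ≠ ρ'}) (E ⊕ E') :=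
  ⟨fun e =>
    match e with
    | Sum.inl e => (t.ends e).map Sum.inl
    | Sum.inr e => (t'.ends e).map (wedgeJ ρ ρ')⟩

/-- The wedge of two multidigraphs `t`, `t'` obtained by identifying `ρ ∈ t` with `ρ' ∈ t'`. -/
def Multidigraph.wedge {V E V' E' : Type} [DecidableEq V']
    (t : Multidigraph V E) (t' : Multidigraph V' E') (ρ : V) (ρ' : V') :
    Multidigraph (V ⊕ {x : V' // x ≠ ρ'}) (E ⊕ E') where
  src := fun e =>
    match e with
    | Sum.inl e => Sum.inl (t.src e)
    | Sum.inr e => wedgeJ ρ ρ' (t'.src e)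
  tgt := fun e =>
    match e with
    | Sum.inl e => Sum.inl (t.tgt e)
    | Sum.inr e => wedgeJ ρ ρ' (t'.tgt e)

/-! ## Flowers (a cycle with graphs attached) and stars (trees wedged at a common root) -/

/-- The canonical map from the vertices of the `i`-th attached graph into the flower,
sending the basepoint `b i` to the cycle vertex `i`. -/
def flowerJ {n : ℕ} {W : Fin n → Type} [∀ i, DecidableEq (W i)]
    (b : ∀ i, W i) (i : Fin n) :
    W i → Fin n ⊕ (Σ i, {x : W i // x ≠ b i}) :=
  fun x => if h : x = b i then Sum.inl i else Sum.inr ⟨i, x, h⟩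

/-- The flower: a cycle of length `n` with the multigraph `d i` attached at the cycle
vertex `i` via its basepoint `b i`; the attached graphs are disjoint except through the
cycle, and `d i` meets the cycle exactly in the vertex `i`. -/
def flowerGraph {n : ℕ} [NeZero n] {W F : Fin n → Type} [∀ i, DecidableEq (W i)]
    (d : ∀ i, Multigraph (W i) (F i)) (b : ∀ i, W i) :
    Multigraph (Fin n ⊕ (Σ i, {x : W i // x ≠ b i})) (Fin n ⊕ (Σ i, F i)) :=
  ⟨fun e =>
    match e with
    | Sum.inl k => s(Sum.inl k, Sum.inl (k + 1))
    | Sum.inr ⟨i, f⟩ => ((d i).ends f).map (flowerJ b i)⟩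

/-- The canonical map from the vertices of the `i`-th tree into the star, sending the
root `r i` to the common amalgamated root. -/
def starJ {n : ℕ} {W : Fin n → Type} [∀ i, DecidableEq (W i)]
    (r : ∀ i, W i) (i : Fin n) :
    W i → Unit ⊕ (Σ i, {x : W i // x ≠ r i}) :=
  fun x => if h : x = r i then Sum.inl () else Sum.inr ⟨i, x, h⟩

/-- The star: the disjoint union of the multigraphs `t i` with all the roots `r i`
identified to a single vertex. -/
def starGraph {n : ℕ} {W F : Fin n → Type} [∀ i, DecidableEq (W i)]
    (t : ∀ i, Multigraph (W i) (F i)) (r : ∀ i, W i) :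
    Multigraph (Unit ⊕ (Σ i, {x : W i // x ≠ r i})) (Σ i, F i) :=
  ⟨fun e => ((t e.1).ends e.2).map (starJ r e.1)⟩

/-! ## Graphs of matrices -/

/-- The partition of `V` identifying the input `vin` with the output `vout` (and nothing
else). -/
def rootSetoid {V : Type} (vin vout : V) : Setoid V where
  r a b := a = b ∨ ((a = vin ∨ a = vout) ∧ (b = vin ∨ b = vout))
  iseqv := by
    constructor
    · intro x; exact Or.inl rfl
    · rintro x y (rfl | ⟨hx, hy⟩)
      · exact Or.inl rfl
      · exact Or.inr ⟨hy, hx⟩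
    · rintro x y z (rfl | ⟨hx, hy⟩) (rfl | ⟨hy', hz⟩)
      · exact Or.inl rfl
      · exact Or.inr ⟨hy', hz⟩
      · exact Or.inr ⟨hx, hy⟩
      · exact Or.inr ⟨hx, hz⟩

/-- The graph of matrices `Z_g(A₁, …, A_K)` associated to a bi-rooted multidigraph `g`
with input `vin`, output `vout` and edge ordering `o`. -/
noncomputable def graphOfMatrices {V E : Type} [Fintype V] [Fintype E] [DecidableEq V] {K N : ℕ}
    (g : Multidigraph V E) (vin vout : V) (o : E ≃ Fin K)
    (A : Fin K → Matrix (Fin N) (Fin N) ℂ) : Matrix (Fin N) (Fin N) ℂ :=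
  Matrix.of fun i j =>
    ∑ φ : V → Fin N,
      if φ vout = i ∧ φ vin = j then ∏ e : E, A (o e) (φ (g.tgt e)) (φ (g.src e)) else 0

/-! ## Set partitions as finite set systems -/

/-- `P` is a partition of the (finite) type `V`: its blocks are nonempty and every
element of `V` lies in exactly one block. -/
def IsPartitionOf (V : Type) [DecidableEq V] (P : Finset (Finset V)) : Prop :=
  (∀ B ∈ P, B.Nonempty) ∧ ∀ v : V, ∃! B, B ∈ P ∧ v ∈ B

/-- The block of the partition `P` containing `v`. -/
def blockOf {V : Type} [DecidableEq V] (P : Finset (Finset V)) (hP : IsPartitionOf V P)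
    (v : V) : {B : Finset V // B ∈ P} :=
  ⟨Finset.choose (fun B => v ∈ B) P (hP.2 v),
    Finset.choose_mem (fun B => v ∈ B) P (hP.2 v)⟩

/-!
An edge `e = vx` on no simple cycle is a bridge. If `e` lies on a simple cycle `C` and `C` is
the only cycle through `e`, then deleting `e` together with the other edge of `C` at `v`
separates `v` from `x`, since a `v`–`x` path avoiding both would close up with `e` to a second
cycle through `e`. Taking for `e` the first edge of a `v`–`w` path, whose remainder avoids `v`,
gives a cut of at most two edges between `v` and `w`, and connectivity gives `λ(v, w) ≥ 1`.

Conversely, if two distinct simple cycles `C`, `C'` share an edge, then `C'` leaves `C` along a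
walk `P` with edges off `C` between distinct vertices `x ≠ y` of `C`. The two arcs of `C` and `P`
are three edge-disjoint `x`–`y` walks, so no two edges separate `x` from `y`.
-/

namespace Multigraph

variable {V E : Type} {G : Multigraph V E}

namespace Walk

def append : ∀ {u v w : V}, G.Walk u v → G.Walk v w → G.Walk u w
  | _, _, _, .nil _, q => q
  | _, _, _, .cons e h p, q => .cons e h (append p q)

def reverse : ∀ {u v : V}, G.Walk u v → G.Walk v u
  | _, _, .nil v => .nil v
  | _, _, .cons e h p => (reverse p).append (.cons e (by rw [h, Sym2.eq_swap]) (.nil _))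

@[simp] lemma edges_nil (v : V) : (nil v : G.Walk v v).edges = [] := rfl

@[simp] lemma edges_cons {u v w : V} (e : E) (h : G.ends e = s(u, v)) (p : G.Walk v w) :
    (cons e h p).edges = e :: p.edges := rfl

@[simp] lemma verts_nil (v : V) : (nil v : G.Walk v v).verts = [v] := rfl

@[simp] lemma verts_cons {u v w : V} (e : E) (h : G.ends e = s(u, v)) (p : G.Walk v w) :
    (cons e h p).verts = u :: p.verts := rfl

@[simp] lemma edges_append : ∀ {u v w : V} (p : G.Walk u v) (q : G.Walk v w),
    (p.append q).edges = p.edges ++ q.edges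
  | _, _, _, .nil _, _ => rfl
  | _, _, _, .cons _ _ p, q => by simp [append, edges_append p q]

@[simp] lemma edges_reverse : ∀ {u v : V} (p : G.Walk u v), p.reverse.edges = p.edges.reverse
  | _, _, .nil _ => rfl
  | _, _, .cons _ _ p => by simp [reverse, edges_reverse p]

lemma verts_ne_nil : ∀ {u v : V} (p : G.Walk u v), p.verts ≠ []
  | _, _, .nil _ => by simp
  | _, _, .cons _ _ _ => by simp

lemma verts_append : ∀ {u v w : V} (p : G.Walk u v) (q : G.Walk v w),
    (p.append q).verts = p.verts.dropLast ++ q.verts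
  | _, _, _, .nil _, _ => rfl
  | _, _, _, .cons _ _ p, q => by
      simp [append, verts_append p q, List.dropLast_cons_of_ne_nil (verts_ne_nil p)]

lemma verts_eq_dropLast_append : ∀ {u v : V} (p : G.Walk u v), p.verts = p.verts.dropLast ++ [v]
  | _, _, .nil _ => rfl
  | _, _, .cons _ _ p => by
      simp [List.dropLast_cons_of_ne_nil (verts_ne_nil p), ← verts_eq_dropLast_append p]

lemma start_mem_verts {u v : V} (p : G.Walk u v) : u ∈ p.verts := by
  cases p <;> simp

lemma mem_verts_of_mem_edges : ∀ {u w : V} (p : G.Walk u w) {e : E} {v : V},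
    e ∈ p.edges → v ∈ G.ends e → v ∈ p.verts
  | _, _, .nil _, _, _, he, _ => by simp at he
  | _, _, .cons f hf p, e, v, he, hv => by
      rcases List.mem_cons.mp he with rfl | he
      · rw [hf, Sym2.mem_iff] at hv
        rcases hv with rfl | rfl
        · simp
        · simp [start_mem_verts p]
      · simp [mem_verts_of_mem_edges p he hv]

lemma IsPath.of_cons {u v w : V} {e : E} {h : G.ends e = s(u, v)} {p : G.Walk v w}
    (hp : (cons e h p).IsPath) : p.IsPath :=
  (List.nodup_cons.mp hp).2

lemma IsPath.start_notMem {u v w : V} {e : E} {h : G.ends e = s(u, v)} {p : G.Walk v w}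
    (hp : (cons e h p).IsPath) : u ∉ p.verts :=
  (List.nodup_cons.mp hp).1

lemma IsPath.edges_nodup : ∀ {u v : V} {p : G.Walk u v}, p.IsPath → p.edges.Nodup
  | _, _, .nil _, _ => by simp
  | _, _, .cons _ h p, hp => by
      rw [edges_cons, List.nodup_cons]
      exact ⟨fun he => hp.start_notMem (p.mem_verts_of_mem_edges he (h ▸ Sym2.mem_mk_left _ _)),
        hp.of_cons.edges_nodup⟩

lemma exists_mem_edges_start_mem_ends {u v : V} (p : G.Walk u v) (huv : u ≠ v) :
    ∃ e ∈ p.edges, u ∈ G.ends e := by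
  cases p with
  | nil => exact absurd rfl huv
  | cons e h p => exact ⟨e, by simp, h ▸ Sym2.mem_mk_left _ _⟩

lemma exists_mem_edges_mem_ends {u v x : V} (p : G.Walk u v) (huv : u ≠ v) (hx : x ∈ s(u, v)) :
    ∃ e ∈ p.edges, x ∈ G.ends e := by
  rcases Sym2.mem_iff.mp hx with rfl | rfl
  · exact p.exists_mem_edges_start_mem_ends huv
  · simpa using p.reverse.exists_mem_edges_start_mem_ends huv.symm

lemma exists_split_of_mem_verts : ∀ {u v : V} (p : G.Walk u v) {x : V}, x ∈ p.verts →
    ∃ (p₁ : G.Walk u x) (p₂ : G.Walk x v),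
      p.edges = p₁.edges ++ p₂.edges ∧ p.verts = p₁.verts.dropLast ++ p₂.verts
  | _, _, .nil _, x, hx => by
      obtain rfl := List.mem_singleton.mp hx
      exact ⟨.nil _, .nil _, rfl, rfl⟩
  | u, _, .cons e h p, x, hx => by
      by_cases hxu : x = u
      · subst hxu
        exact ⟨.nil _, .cons e h p, rfl, rfl⟩
      · obtain ⟨p₁, p₂, hE, hV⟩ :=
          p.exists_split_of_mem_verts ((List.mem_cons.mp hx).resolve_left hxu)
        refine ⟨.cons e h p₁, p₂, by simp [hE], ?_⟩
        simp [hV, List.dropLast_cons_of_ne_nil (verts_ne_nil p₁)]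

lemma exists_split_of_mem_edges : ∀ {u v : V} (p : G.Walk u v) {e : E}, e ∈ p.edges →
    ∃ (a b : V) (_ : G.ends e = s(a, b)) (p₁ : G.Walk u a) (p₂ : G.Walk b v),
      p.edges = p₁.edges ++ e :: p₂.edges ∧ p.verts = p₁.verts ++ p₂.verts
  | _, _, .nil _, _, he => by simp at he
  | _, _, .cons f hf p, e, he => by
      by_cases hef : e = f
      · subst hef
        exact ⟨_, _, hf, .nil _, p, rfl, rfl⟩
      · obtain ⟨a, b, hab, p₁, p₂, hE, hV⟩ :=
          p.exists_split_of_mem_edges ((List.mem_cons.mp he).resolve_left hef)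
        exact ⟨a, b, hab, .cons f hf p₁, p₂, by simp [hE], by simp [hV]⟩

lemma exists_isPath_subset : ∀ {u v : V} (p : G.Walk u v),
    ∃ q : G.Walk u v, q.IsPath ∧ q.edges ⊆ p.edges
  | _, _, .nil v => ⟨.nil v, by simp [IsPath], by simp⟩
  | u, _, .cons e h p => by
      obtain ⟨q, hq, hsub⟩ := p.exists_isPath_subset
      by_cases hu : u ∈ q.verts
      · obtain ⟨q₁, q₂, hE, hV⟩ := q.exists_split_of_mem_verts hu
        refine ⟨q₂, ?_, ?_⟩
        · have hq : (q₁.verts.dropLast ++ q₂.verts).Nodup := hV ▸ hq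
          exact hq.of_append_right
        · intro f hf
          exact List.mem_cons_of_mem _ (hsub (hE ▸ List.mem_append_right _ hf))
      · exact ⟨.cons e h q, List.nodup_cons.mpr ⟨hu, hq⟩, List.cons_subset_cons _ hsub⟩

lemma exists_isPath_remove_edge {u : V} {c : G.Walk u u} (hndE : c.edges.Nodup)
    (hndV : c.verts.dropLast.Nodup) {e : E} (he : e ∈ c.edges) :
    ∃ (a b : V) (q : G.Walk b a), G.ends e = s(a, b) ∧ q.IsPath ∧
      ∀ f, f ∈ q.edges ↔ f ∈ c.edges ∧ f ≠ e := by
  obtain ⟨a, b, hab, p₁, p₂, hE, hV⟩ := c.exists_split_of_mem_edges he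
  refine ⟨a, b, p₂.append p₁, hab, ?_, fun f => ?_⟩
  · rw [hV, List.dropLast_append_of_ne_nil p₂.verts_ne_nil] at hndV
    rw [IsPath, verts_append]
    exact List.perm_append_comm.nodup_iff.mp hndV
  · rw [hE] at hndE ⊢
    have he₁ : e ∉ p₁.edges := fun h => (List.nodup_append.mp hndE).2.2 e h e (by simp) rfl
    have he₂ : e ∉ p₂.edges := (List.nodup_cons.mp (List.nodup_append.mp hndE).2.1).1
    simp only [edges_append, List.mem_append, List.mem_cons]
    refine ⟨?_, by tauto⟩
    rintro (hf | hf)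
    · exact ⟨Or.inr (Or.inr hf), fun h => he₂ (h ▸ hf)⟩
    · exact ⟨Or.inl hf, fun h => he₁ (h ▸ hf)⟩

lemma exists_rotate {u x : V} (c : G.Walk u u) (hx : x ∈ c.verts) :
    ∃ c' : G.Walk x x, c'.edges.Perm c.edges ∧ c.verts ⊆ c'.verts := by
  obtain ⟨p₁, p₂, hE, hV⟩ := c.exists_split_of_mem_verts hx
  refine ⟨p₂.append p₁, by simp [hE, List.perm_append_comm], fun y hy => ?_⟩
  rw [verts_append, List.mem_append]
  rw [hV, List.mem_append, p₂.verts_eq_dropLast_append, List.mem_append,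
    List.mem_singleton] at hy
  rcases hy with hy | hy | rfl
  · exact Or.inr (List.dropLast_subset _ hy)
  · exact Or.inl hy
  · exact Or.inr p₁.start_mem_verts

lemma exists_two_edgeDisjoint_walks {u x y : V} (c : G.Walk u u) (hndE : c.edges.Nodup)
    (hx : x ∈ c.verts) (hy : y ∈ c.verts) :
    ∃ W₁ W₂ : G.Walk x y, W₁.edges ⊆ c.edges ∧ W₂.edges ⊆ c.edges ∧
      W₁.edges.Disjoint W₂.edges := by
  obtain ⟨c', hperm, hsub⟩ := c.exists_rotate hx
  obtain ⟨q₁, q₂, hE, -⟩ := c'.exists_split_of_mem_verts (hsub hy)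
  have hnd : (q₁.edges ++ q₂.edges).Nodup := hE ▸ hperm.nodup_iff.mpr hndE
  refine ⟨q₁, q₂.reverse, fun f hf => ?_, fun f hf => ?_, ?_⟩
  · exact hperm.subset (hE ▸ List.mem_append_left _ hf)
  · exact hperm.subset (hE ▸ List.mem_append_right _ (by simpa using hf))
  · simpa using List.disjoint_of_nodup_append hnd

lemma exists_walk_edges_disjoint_to_verts {u₁ u₂ : V} (c : G.Walk u₁ u₂) :
    ∀ {m t : V} (q : G.Walk m t), t ∈ c.verts →
      ∃ (y : V) (P : G.Walk m y), y ∈ c.verts ∧ y ∈ q.verts ∧ P.edges.Disjoint c.edges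
  | _, t, .nil _, ht => ⟨t, .nil t, ht, by simp, by simp⟩
  | m, _, .cons g hg q, ht => by
      by_cases hgc : g ∈ c.edges
      · exact ⟨m, .nil m, c.mem_verts_of_mem_edges hgc (hg ▸ Sym2.mem_mk_left _ _), by simp,
          by simp⟩
      · obtain ⟨y, P, hyc, hyq, hP⟩ := c.exists_walk_edges_disjoint_to_verts q ht
        exact ⟨y, .cons g hg P, hyc, by simp [hyq], by simp [hgc, hP]⟩

lemma exists_walk_edges_disjoint_of_isPath {u₁ u₂ : V} (c : G.Walk u₁ u₂) :
    ∀ {s t : V} (q : G.Walk s t), q.IsPath → s ∈ c.verts → t ∈ c.verts →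
      ¬ q.edges ⊆ c.edges →
      ∃ x y : V, x ≠ y ∧ x ∈ c.verts ∧ y ∈ c.verts ∧
        ∃ P : G.Walk x y, P.edges.Disjoint c.edges
  | _, _, .nil _, _, _, _, hq => absurd (by simp) hq
  | s, _, .cons g hg q, hpath, hs, ht, hq => by
      by_cases hgc : g ∈ c.edges
      · exact c.exists_walk_edges_disjoint_of_isPath q hpath.of_cons
          (c.mem_verts_of_mem_edges hgc (hg ▸ Sym2.mem_mk_right _ _)) ht
          (fun h => hq (List.cons_subset.mpr ⟨hgc, h⟩))
      · obtain ⟨y, P, hyc, hyq, hP⟩ := c.exists_walk_edges_disjoint_to_verts q ht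
        exact ⟨s, y, fun h => hpath.start_notMem (h ▸ hyq), hs, hyc, .cons g hg P,
          by simp [hgc, hP]⟩

end Walk

lemma ReachAvoid.trans {F : Set E} {u v w : V} (h₁ : G.ReachAvoid F u v)
    (h₂ : G.ReachAvoid F v w) : G.ReachAvoid F u w := by
  induction h₂ with
  | refl => exact h₁
  | tail e he hvw _ ih => exact ih.tail e he hvw

lemma ReachAvoid.symm {F : Set E} {u v : V} (h : G.ReachAvoid F v u) :
    G.ReachAvoid F u v := by
  induction h with
  | refl => exact .refl _
  | tail e he hvw _ ih => exact ((ReachAvoid.refl _).tail e he (by rw [hvw, Sym2.eq_swap])).trans ih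

lemma Walk.reachAvoid {F : Set E} {u v : V} (p : G.Walk u v) (hp : ∀ e ∈ p.edges, e ∉ F) :
    G.ReachAvoid F u v := by
  induction p with
  | nil v => exact .refl v
  | cons e h p ih =>
      exact ((ReachAvoid.refl _).tail e (hp e (by simp)) h).trans
        (ih fun f hf => hp f (by simp [hf]))

lemma ReachAvoid.exists_isPath {F : Set E} {u v : V} (h : G.ReachAvoid F u v) :
    ∃ p : G.Walk u v, p.IsPath ∧ ∀ e ∈ p.edges, e ∉ F := by
  suffices ∃ p : G.Walk u v, ∀ e ∈ p.edges, e ∉ F by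
    obtain ⟨p, hp⟩ := this
    obtain ⟨q, hq, hsub⟩ := p.exists_isPath_subset
    exact ⟨q, hq, fun e he => hp e (hsub he)⟩
  induction h with
  | refl => exact ⟨.nil _, by simp⟩
  | tail e he hvw _ ih =>
      obtain ⟨p, hp⟩ := ih
      refine ⟨p.append (.cons e hvw (.nil _)), fun f hf => ?_⟩
      simp only [Walk.edges_append, Walk.edges_cons, Walk.edges_nil, List.mem_append,
        List.mem_singleton] at hf
      rcases hf with hf | rfl
      exacts [hp f hf, he]

lemma edgeConn_le_card {v w : V} {F : Finset E} (hF : G.IsEdgeCut v w ↑F) :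
    G.edgeConn v w ≤ F.card :=
  Nat.sInf_le ⟨F, rfl, hF⟩

lemma edgeConn_pos {v w : V} {F : Finset E} (hreach : G.ReachAvoid ∅ v w)
    (hF : G.IsEdgeCut v w ↑F) : 0 < G.edgeConn v w := by
  obtain ⟨F₀, hF₀, hcut⟩ := Nat.sInf_mem (⟨F.card, F, rfl, hF⟩ :
    {k : ℕ | ∃ F : Finset E, F.card = k ∧ G.IsEdgeCut v w ↑F}.Nonempty)
  refine Nat.pos_of_ne_zero fun h0 => hcut ?_
  obtain rfl : F₀ = ∅ := Finset.card_eq_zero.mp (hF₀.trans h0)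
  simpa using hreach

lemma exists_isEdgeCut_card_eq_edgeConn {v w : V} (h : G.edgeConn v w ≠ 0) :
    ∃ F : Finset E, F.card = G.edgeConn v w ∧ G.IsEdgeCut v w ↑F :=
  Nat.sInf_mem (Nat.nonempty_of_pos_sInf (Nat.pos_of_ne_zero h))

lemma reachAvoid_of_three_edgeDisjoint_walks {x y : V} {F : Finset E} (hF : F.card ≤ 2)
    (W₁ W₂ W₃ : G.Walk x y) (h₁₂ : W₁.edges.Disjoint W₂.edges)
    (h₁₃ : W₁.edges.Disjoint W₃.edges) (h₂₃ : W₂.edges.Disjoint W₃.edges) :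
    G.ReachAvoid ↑F x y := by
  classical
  by_contra hcut
  have hit (W : G.Walk x y) : ∃ g ∈ W.edges, g ∈ F := by
    by_contra! hW
    exact hcut (W.reachAvoid hW)
  obtain ⟨g₁, hg₁, hg₁F⟩ := hit W₁
  obtain ⟨g₂, hg₂, hg₂F⟩ := hit W₂
  obtain ⟨g₃, hg₃, hg₃F⟩ := hit W₃
  have hcard : ({g₁, g₂, g₃} : Finset E).card = 3 := Finset.card_eq_three.mpr
    ⟨g₁, g₂, g₃, fun h => h₁₂ hg₁ (h ▸ hg₂), fun h => h₁₃ hg₁ (h ▸ hg₃),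
      fun h => h₂₃ hg₂ (h ▸ hg₃), rfl⟩
  have := Finset.card_le_card (s := {g₁, g₂, g₃}) (t := F)
    (by simp [Finset.insert_subset_iff, hg₁F, hg₂F, hg₃F])
  omega

variable [DecidableEq E]

lemma ReachAvoid.exists_isSimpleCycleOn {F : Set E} {v x : V} {e : E}
    (he : G.ends e = s(x, v)) (heF : e ∈ F) (h : G.ReachAvoid F v x) :
    ∃ S, G.IsSimpleCycleOn S ∧ e ∈ S ∧ ∀ f ∈ S, f ≠ e → f ∉ F := by
  obtain ⟨r, hr, hrF⟩ := h.exists_isPath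
  have her : e ∉ r.edges := fun h => hrF e h heF
  refine ⟨insert e r.edges.toFinset, ⟨v, r.append (.cons e he (.nil v)), by simp, ?_, ?_, ?_⟩,
    by simp, ?_⟩
  · simpa using hr.edges_nodup.append (List.nodup_singleton e) (List.disjoint_singleton.mpr her)
  · rw [Walk.verts_append, Walk.verts_cons, Walk.verts_nil,
      List.dropLast_append_of_ne_nil (by simp)]
    simpa [← r.verts_eq_dropLast_append] using show r.verts.Nodup from hr
  · ext; simp
  · simp only [Finset.mem_insert, List.mem_toFinset]
    rintro f (rfl | hf) hfe
    exacts [absurd rfl hfe, hrF f hf]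

def CyclesEdgeDisjoint (G : Multigraph V E) : Prop :=
  ∀ (e : E) (S S' : Finset E), G.IsSimpleCycleOn S → G.IsSimpleCycleOn S' →
    e ∈ S → e ∈ S' → S = S'

lemma isEdgeCut_singleton_of_forall_notMem {v x : V} {e : E} (he : G.ends e = s(x, v))
    (hcyc : ∀ S, G.IsSimpleCycleOn S → e ∉ S) : G.IsEdgeCut v x ↑({e} : Finset E) := by
  intro h
  obtain ⟨S, hS, heS, -⟩ := h.exists_isSimpleCycleOn he (by simp)
  exact hcyc S hS heS

lemma CyclesEdgeDisjoint.isEdgeCut_pair (h : G.CyclesEdgeDisjoint) {S : Finset E}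
    (hS : G.IsSimpleCycleOn S) {v x : V} {e e' : E} (he : G.ends e = s(x, v)) (heS : e ∈ S)
    (he'S : e' ∈ S) (he'e : e' ≠ e) : G.IsEdgeCut v x ↑({e, e'} : Finset E) := by
  intro hreach
  obtain ⟨S', hS', heS', hS'F⟩ := hreach.exists_isSimpleCycleOn he (by simp)
  obtain rfl := h e S' S hS' hS heS' heS
  exact hS'F e' he'S he'e (by simp)

lemma CyclesEdgeDisjoint.exists_isEdgeCut_incident (h : G.CyclesEdgeDisjoint) {v x : V} {e : E}
    (he : G.ends e = s(v, x)) (hvx : v ≠ x) :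
    ∃ F : Finset E, F.card ≤ 2 ∧ (∀ f ∈ F, v ∈ G.ends f) ∧ G.IsEdgeCut v x ↑F := by
  have he' : G.ends e = s(x, v) := he.trans Sym2.eq_swap
  by_cases hcyc : ∃ S, G.IsSimpleCycleOn S ∧ e ∈ S
  · obtain ⟨S, hS, heS⟩ := hcyc
    obtain ⟨u, c, -, hndE, hndV, rfl⟩ := id hS
    obtain ⟨a, b, q, hab, -, hq⟩ :=
      Walk.exists_isPath_remove_edge hndE hndV (List.mem_toFinset.mp heS)
    have hba : s(b, a) = s(v, x) := Sym2.eq_swap.trans (hab.symm.trans he)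
    obtain ⟨e', he'q, hve'⟩ := q.exists_mem_edges_mem_ends
      (fun h => hvx (Sym2.mk_isDiag_iff.mp (hba ▸ Sym2.mk_isDiag_iff.mpr h)))
      (hba ▸ Sym2.mem_mk_left v x)
    obtain ⟨he'c, he'e⟩ := (hq e').mp he'q
    refine ⟨{e, e'}, Finset.card_le_two, ?_, h.isEdgeCut_pair hS he' heS
      (List.mem_toFinset.mpr he'c) he'e⟩
    simp [he, hve']
  · push Not at hcyc
    exact ⟨{e}, by simp, by simp [he], isEdgeCut_singleton_of_forall_notMem he' hcyc⟩

lemma CyclesEdgeDisjoint.exists_isEdgeCut (h : G.CyclesEdgeDisjoint) {v w : V} (hvw : v ≠ w)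
    (hreach : G.ReachAvoid ∅ v w) : ∃ F : Finset E, F.card ≤ 2 ∧ G.IsEdgeCut v w ↑F := by
  obtain ⟨p, hp, -⟩ := hreach.exists_isPath
  cases p with
  | nil => exact absurd rfl hvw
  | cons e he p =>
    obtain ⟨F, hcard, hinc, hcut⟩ := h.exists_isEdgeCut_incident he
      (fun hvx => hp.start_notMem (hvx ▸ p.start_mem_verts))
    have hpF : G.ReachAvoid ↑F _ w :=
      p.reachAvoid fun f hf hfF => hp.start_notMem (p.mem_verts_of_mem_edges hf (hinc f hfF))
    exact ⟨F, hcard, fun hvw => hcut (hvw.trans hpF.symm)⟩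

lemma exists_three_edgeDisjoint_walks_of_not_subset {S S' : Finset E}
    (hS : G.IsSimpleCycleOn S) (hS' : G.IsSimpleCycleOn S') {e : E} (heS : e ∈ S) (heS' : e ∈ S') (hsub : ¬ S' ⊆ S) :
    ∃ x y : V, x ≠ y ∧ ∃ W₁ W₂ W₃ : G.Walk x y, W₁.edges.Disjoint W₂.edges ∧
      W₁.edges.Disjoint W₃.edges ∧ W₂.edges.Disjoint W₃.edges := by
  obtain ⟨u, c, -, hndE, -, rfl⟩ := hS
  obtain ⟨u', c', -, hndE', hndV', rfl⟩ := hS'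
  rw [List.mem_toFinset] at heS heS'
  obtain ⟨a, b, q, hab, hq, hqc'⟩ := Walk.exists_isPath_remove_edge hndE' hndV' heS'
  have hqc : ¬ q.edges ⊆ c.edges := by
    obtain ⟨f, hfc', hfc⟩ := Finset.not_subset.mp hsub
    rw [List.mem_toFinset] at hfc hfc'
    exact fun h => hfc (h ((hqc' f).mpr ⟨hfc', by rintro rfl; exact hfc heS⟩))
  obtain ⟨x, y, hxy, hx, hy, P, hP⟩ := c.exists_walk_edges_disjoint_of_isPath q hq
    (c.mem_verts_of_mem_edges heS (hab ▸ Sym2.mem_mk_right a b))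
    (c.mem_verts_of_mem_edges heS (hab ▸ Sym2.mem_mk_left a b)) hqc
  obtain ⟨W₁, W₂, h₁, h₂, h₁₂⟩ := c.exists_two_edgeDisjoint_walks hndE hx hy
  exact ⟨x, y, hxy, W₁, W₂, P, h₁₂, fun f hf hfP => hP hfP (h₁ hf),
    fun f hf hfP => hP hfP (h₂ hf)⟩

lemma IsSimpleCycleOn.subset_of_edgeConn_le_two
    (h : ∀ v w : V, v ≠ w → G.edgeConn v w = 1 ∨ G.edgeConn v w = 2) {S S' : Finset E}
    (hS : G.IsSimpleCycleOn S) (hS' : G.IsSimpleCycleOn S') {e : E} (heS : e ∈ S)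
    (heS' : e ∈ S') : S' ⊆ S := by
  by_contra hsub
  obtain ⟨x, y, hxy, W₁, W₂, W₃, h₁₂, h₁₃, h₂₃⟩ :=
    exists_three_edgeDisjoint_walks_of_not_subset hS hS' heS heS' hsub
  have hxy := h x y hxy
  obtain ⟨F, hF, hcut⟩ := exists_isEdgeCut_card_eq_edgeConn (by omega : G.edgeConn x y ≠ 0)
  exact hcut (reachAvoid_of_three_edgeDisjoint_walks (by omega) W₁ W₂ W₃ h₁₂ h₁₃ h₂₃)

end Multigraph

theorem stmt_8_general {V E : Type} [DecidableEq E]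
    (G : Multigraph V E) (hconn : G.Connected) :
    (∀ (e : E) (S S' : Finset E), G.IsSimpleCycleOn S → G.IsSimpleCycleOn S' →
        e ∈ S → e ∈ S' → S = S') ↔
      ∀ v w : V, v ≠ w → G.edgeConn v w = 1 ∨ G.edgeConn v w = 2 := by
  constructor
  · intro h v w hvw
    obtain ⟨F, hF, hcut⟩ := Multigraph.CyclesEdgeDisjoint.exists_isEdgeCut h hvw (hconn v w)
    have := G.edgeConn_pos (hconn v w) hcut
    have := G.edgeConn_le_card hcut
    omega
  · intro h e S S' hS hS' heS heS'
    exact (hS'.subset_of_edgeConn_le_two h hS heS' heS).antisymm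
      (hS.subset_of_edgeConn_le_two h hS' heS heS')

/-- A finite connected multigraph is a quasi-cactus (every edge belongs
to at most one simple cycle) iff `λ(v, w) ∈ {1, 2}` for every pair of distinct vertices. -/
theorem stmt_8 {V E : Type} [Nonempty V] [Fintype V] [Fintype E] [DecidableEq E]
    (G : Multigraph V E) (hconn : G.Connected) :
    (∀ (e : E) (S S' : Finset E), G.IsSimpleCycleOn S → G.IsSimpleCycleOn S' →
        e ∈ S → e ∈ S' → S = S') ↔
      ∀ v w : V, v ≠ w → G.edgeConn v w = 1 ∨ G.edgeConn v w = 2 :=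
  stmt_8_general G hconn
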